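/- Let X be the tree-indexed Markov chain and fix a vertex u. If lim inf over j of 2^{j(u)−j} ∏_{ℓ=j(u)}^{j−1} γ_ℓ = 0, then almost surely there exists a descendant u' of u (i.e. u' ∈ uU) with X_{u'} = 0. -/

import Mathlib

open MeasureTheory
open scoped ENNReal

/-- The finite set of binary words of length `j` (the generation-`j` vertices of
the binary tree). -/
def words (j : ℕ) : Finset (List Bool) :=
  Finset.image (fun f : Fin j → Bool => List.ofFn f) Finset.univ

/-- `v` is a strict descendant of `u` in the binary tree (`v ∈ uU*`). -/
def StrictDesc (u v : List Bool) : Prop := u <+: v ∧ u ≠ v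

/-- The σ-field generated by the states `X_v`, for `v` in a set `V` of vertices. -/
def genField {Ω : Type*} [MeasurableSpace Ω] (X : List Bool → Ω → Bool)
    (V : Set (List Bool)) : MeasurableSpace Ω :=
  ⨆ v ∈ V, MeasurableSpace.comap (X v) ⊤

/-- The "past" σ-field `G_u = σ(X_v, v ∉ uU*)`. -/
def pastField {Ω : Type*} [MeasurableSpace Ω] (X : List Bool → Ω → Bool)
    (u : List Bool) : MeasurableSpace Ω :=
  genField X {v | ¬ StrictDesc u v}

/-- The σ-field `F_j` generated by the states of vertices of generation at most `j`. -/
def upToField {Ω : Type*} [MeasurableSpace Ω] (X : List Bool → Ω → Bool)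
    (j : ℕ) : MeasurableSpace Ω :=
  genField X {v | v.length ≤ j}

/-- The Markov condition: conditionally on the past `G_u`, the pair of states
`(X_{u0}, X_{u1})` has law `ν_{X_u, j(u)}`. -/
def MarkovCond {Ω : Type*} [MeasurableSpace Ω] (μ : Measure Ω)
    (X : List Bool → Ω → Bool) (ν : Bool → ℕ → Measure (Bool × Bool)) : Prop :=
  ∀ u : List Bool, ∀ A : Set (Bool × Bool), ∀ B : Set Ω,
    MeasurableSet[pastField X u] B →
    μ (B ∩ {ω | (X (u ++ [false]) ω, X (u ++ [true]) ω) ∈ A}) =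
      ∫⁻ ω in B, ν (X u ω) u.length A ∂μ

/-- `#S_j`: the number of generation-`j` vertices in state `1`. -/
noncomputable def Scard {Ω : Type*} (X : List Bool → Ω → Bool) (j : ℕ) (ω : Ω) : ℕ :=
  ((words j).filter fun u => X u ω = true).card

/-- `#S̃_j`: the number of generation-`j` vertices in state `1` whose parent is
in state `0`. -/
noncomputable def Stcard {Ω : Type*} (X : List Bool → Ω → Bool) (j : ℕ) (ω : Ω) : ℕ :=
  ((words j).filter fun u => X u ω = true ∧ X u.dropLast ω = false).card

/-- `γ_j = 2 ν_{1,j}({(1,1)}) + ν_{1,j}({(1,0),(0,1)})`. -/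
noncomputable def gammaCoef (ν : Bool → ℕ → Measure (Bool × Bool)) (j : ℕ) : ℝ :=
  2 * (ν true j {((true, true) : Bool × Bool)}).toReal +
    (ν true j {((true, false) : Bool × Bool), ((false, true) : Bool × Bool)}).toReal

/-- `η_j = 1 − ν_{0,j}({(0,0)})`. -/
noncomputable def etaCoef (ν : Bool → ℕ → Measure (Bool × Bool)) (j : ℕ) : ℝ :=
  1 - (ν false j {((false, false) : Bool × Bool)}).toReal

lemma StrictDesc.length_lt {a v : List Bool} (h : StrictDesc a v) : a.length < v.length :=
  lt_of_le_of_ne h.1.length_le fun he => h.2 (h.1.eq_of_length he)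

lemma genField_measurableSet {Ω : Type*} [MeasurableSpace Ω] (X : List Bool → Ω → Bool)
    {V : Set (List Bool)} {v : List Bool} (hv : v ∈ V) (S : Set Bool) :
    MeasurableSet[genField X V] (X v ⁻¹' S) := by
  have h : MeasurableSpace.comap (X v) ⊤ ≤ genField X V :=
    le_iSup₂ (f := fun v (_ : v ∈ V) => MeasurableSpace.comap (X v) ⊤) v hv
  exact h _ ⟨S, trivial, rfl⟩

/-- if `liminf_j 2^{j(u)−j} ∏_{ℓ=j(u)}^{j−1} γ_ℓ = 0`, then almost
surely the vertex `u` has a descendant (possibly `u` itself) in state `0`. -/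
theorem stmt10 {Ω : Type*} [MeasurableSpace Ω] (μ : Measure Ω) [IsProbabilityMeasure μ]
    (X : List Bool → Ω → Bool) (hX : ∀ u, Measurable (X u))
    (ν : Bool → ℕ → Measure (Bool × Bool)) (hν : ∀ b j, IsProbabilityMeasure (ν b j))
    (hM : MarkovCond μ X ν) (u : List Bool)
    (hliminf : Filter.liminf
      (fun j : ℕ => (2:ℝ) ^ ((u.length : ℤ) - j) * ∏ ℓ ∈ Finset.Ico u.length j, gammaCoef ν ℓ)
      Filter.atTop = 0) :
    ∀ᵐ ω ∂μ, ∃ v : List Bool, u <+: v ∧ X v ω = false := by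
  classical
  set n := u.length with hn
  set w : ℕ → List Bool := fun k => u ++ List.replicate k false with hw
  have hwlen : ∀ k, (w k).length = n + k := by intro k; simp [hw, hn]
  have hw0 : w 0 = u := by simp [hw]
  have hwsucc : ∀ k, w k ++ [false] = w (k+1) := by
    intro k
    simp [hw, List.replicate_succ', List.append_assoc]
  set C : ℕ → Set Ω := fun k => {ω | X u ω = true ∧ ∀ i < k,
    X (w i ++ [false]) ω = true ∧ X (w i ++ [true]) ω = true} with hC
  have hCeq : ∀ k, C k = (X u ⁻¹' {true}) ∩ ⋂ i, ⋂ (_ : i < k),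
      ((X (w i ++ [false]) ⁻¹' {true}) ∩ (X (w i ++ [true]) ⁻¹' {true})) := by
    intro k
    ext ω
    simp [hC, Set.mem_iInter, forall_and]
  -- measurability w.r.t. the past field at w k
  have hCpast : ∀ k, MeasurableSet[pastField X (w k)] (C k) := by
    intro k
    have key : ∀ v : List Bool, v.length ≤ n + k → ∀ S : Set Bool,
        MeasurableSet[pastField X (w k)] (X v ⁻¹' S) := by
      intro v hv S
      refine genField_measurableSet X ?_ S
      intro hd
      have := hd.length_lt
      rw [hwlen] at this
      omega
    rw [hCeq]
    refine (key u (by omega) _).inter ?_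
    refine MeasurableSet.iInter fun i => MeasurableSet.iInter fun hi => ?_
    exact (key _ (by simp [hwlen i]; omega) _).inter (key _ (by simp [hwlen i]; omega) _)
  -- ambient measurability
  have hCmeas : ∀ k, MeasurableSet (C k) := by
    intro k
    rw [hCeq]
    refine (hX u (measurableSet_singleton true)).inter ?_
    refine MeasurableSet.iInter fun i => MeasurableSet.iInter fun hi => ?_
    exact (hX _ (measurableSet_singleton true)).inter (hX _ (measurableSet_singleton true))
  have hXwk : ∀ k, ∀ ω ∈ C k, X (w k) ω = true := by
    intro k ω hω
    cases k with
    | zero => rw [hw0]; exact hω.1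
    | succ m => rw [← hwsucc m]; exact (hω.2 m (Nat.lt_succ_self m)).1
  have hstep : ∀ k, μ (C (k+1)) = ν true (n + k) {((true,true) : Bool × Bool)} * μ (C k) := by
    intro k
    have hsplit : C (k+1) = C k ∩ {ω | (X (w k ++ [false]) ω, X (w k ++ [true]) ω) ∈
        ({((true,true):Bool×Bool)} : Set (Bool×Bool))} := by
      ext ω
      constructor
      · rintro ⟨h1, h2⟩
        refine ⟨⟨h1, fun i hi => h2 i (hi.trans (Nat.lt_succ_self k))⟩, ?_⟩
        have := h2 k (Nat.lt_succ_self k)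
        simp [this.1, this.2]
      · rintro ⟨⟨h1, h2⟩, h3⟩
        refine ⟨h1, fun i hi => ?_⟩
        rcases Nat.lt_succ_iff_lt_or_eq.mp hi with h | rfl
        · exact h2 i h
        · simp only [Set.mem_setOf_eq, Set.mem_singleton_iff, Prod.mk.injEq] at h3
          exact ⟨h3.1, h3.2⟩
    rw [hsplit, hM (w k) _ (C k) (hCpast k)]
    rw [setLIntegral_congr_fun (hCmeas k) (fun ω hω => by
      rw [hXwk k ω hω, hwlen k])]
    rw [setLIntegral_const]
  have hbound : ∀ k, μ (C k) ≤ ∏ i ∈ Finset.range k, ν true (n + i) {((true,true):Bool×Bool)} := by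
    intro k
    induction k with
    | zero => simpa using prob_le_one
    | succ m ih =>
      rw [hstep m, Finset.prod_range_succ, mul_comm (∏ i ∈ Finset.range m, _)]
      exact mul_le_mul_right ih _
  have hγ0 : ∀ ℓ, 0 ≤ gammaCoef ν ℓ := fun ℓ =>
    add_nonneg (by positivity) ENNReal.toReal_nonneg
  have hγ2 : ∀ ℓ, gammaCoef ν ℓ ≤ 2 := by
    intro ℓ
    have hdisj : Disjoint ({((true,true):Bool×Bool)} : Set (Bool×Bool))
        {((true,false):Bool×Bool), ((false,true):Bool×Bool)} := by
      simp [Set.disjoint_left]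
    have hmeas2 : MeasurableSet ({((true,false):Bool×Bool), ((false,true):Bool×Bool)} :
        Set (Bool×Bool)) := (measurableSet_singleton _).insert _
    have hun : ν true ℓ ({((true,true):Bool×Bool)} ∪
        {((true,false):Bool×Bool), ((false,true):Bool×Bool)}) =
        ν true ℓ {((true,true):Bool×Bool)} +
        ν true ℓ {((true,false):Bool×Bool), ((false,true):Bool×Bool)} :=
      measure_union hdisj hmeas2
    have hle : ν true ℓ {((true,true):Bool×Bool)} +
        ν true ℓ {((true,false):Bool×Bool), ((false,true):Bool×Bool)} ≤ 1 := by
      rw [← hun]; exact prob_le_one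
    have hfin1 : ν true ℓ {((true,true):Bool×Bool)} ≠ ⊤ := measure_ne_top _ _
    have hfin2 : ν true ℓ {((true,false):Bool×Bool), ((false,true):Bool×Bool)} ≠ ⊤ :=
      measure_ne_top _ _
    have hr : (ν true ℓ {((true,true):Bool×Bool)}).toReal +
        (ν true ℓ {((true,false):Bool×Bool), ((false,true):Bool×Bool)}).toReal ≤ 1 := by
      rw [← ENNReal.toReal_add hfin1 hfin2]
      calc _ ≤ (1 : ℝ≥0∞).toReal := ENNReal.toReal_mono ENNReal.one_ne_top hle
        _ = 1 := by simp
    have h2 : 0 ≤ (ν true ℓ {((true,false):Bool×Bool), ((false,true):Bool×Bool)}).toReal :=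
      ENNReal.toReal_nonneg
    unfold gammaCoef
    linarith
  have hfac : ∀ ℓ, (ν true ℓ {((true,true):Bool×Bool)}) ≤
      ENNReal.ofReal (gammaCoef ν ℓ / 2) := by
    intro ℓ
    have h2 : 0 ≤ (ν true ℓ {((true,false):Bool×Bool), ((false,true):Bool×Bool)}).toReal :=
      ENNReal.toReal_nonneg
    have h1 : (ν true ℓ {((true,true):Bool×Bool)}).toReal ≤ gammaCoef ν ℓ / 2 := by
      unfold gammaCoef; linarith
    calc ν true ℓ {((true,true):Bool×Bool)}
        = ENNReal.ofReal (ν true ℓ {((true,true):Bool×Bool)}).toReal :=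
          (ENNReal.ofReal_toReal (measure_ne_top _ _)).symm
      _ ≤ ENNReal.ofReal (gammaCoef ν ℓ / 2) := ENNReal.ofReal_le_ofReal h1
  have hprodbound : ∀ k, μ (C k) ≤
      ENNReal.ofReal (∏ i ∈ Finset.range k, (gammaCoef ν (n+i) / 2)) := by
    intro k
    refine (hbound k).trans ?_
    rw [ENNReal.ofReal_prod_of_nonneg (fun i _ => by have := hγ0 (n+i); linarith)]
    exact Finset.prod_le_prod' fun i _ => hfac (n+i)
  set bfun : ℕ → ℝ := fun j =>
    (2:ℝ) ^ ((n : ℤ) - j) * ∏ ℓ ∈ Finset.Ico n j, gammaCoef ν ℓ with hbfun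
  have hbval : ∀ k, ∏ i ∈ Finset.range k, (gammaCoef ν (n+i) / 2) = bfun (n+k) := by
    intro k
    show _ = (2:ℝ) ^ ((n : ℤ) - (↑(n + k) : ℤ)) * ∏ ℓ ∈ Finset.Ico n (n+k), gammaCoef ν ℓ
    rw [Finset.prod_div_distrib, Finset.prod_const, Finset.card_range,
      Finset.prod_Ico_eq_prod_range]
    have he : ((n : ℤ) - (↑(n + k))) = -(k : ℤ) := by push_cast; ring
    rw [he]
    simp only [Nat.add_sub_cancel_left]
    rw [zpow_neg, zpow_natCast]
    rw [div_eq_mul_inv, mul_comm]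
  -- the failure event
  set F : Set Ω := {ω | ∀ v, u <+: v → X v ω = true} with hF
  have hFC : ∀ k, F ⊆ C k := by
    intro k ω hω
    refine ⟨hω u List.prefix_rfl, fun i hi => ⟨?_, ?_⟩⟩
    · exact hω _ ⟨List.replicate i false ++ [false], by simp [hw, List.append_assoc]⟩
    · exact hω _ ⟨List.replicate i false ++ [true], by simp [hw, List.append_assoc]⟩
  have hble1 : ∀ k, bfun (n + k) ≤ 1 := by
    intro k
    rw [← hbval k]
    refine Finset.prod_le_one (fun i _ => by have := hγ0 (n+i); linarith) ?_
    intro i _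
    have := hγ2 (n+i)
    linarith
  have hb0 : ∀ k, 0 ≤ bfun (n + k) := by
    intro k
    rw [← hbval k]
    exact Finset.prod_nonneg fun i _ => by have := hγ0 (n+i); linarith
  have hFle : ∀ j, n ≤ j → (μ F).toReal ≤ bfun j := by
    intro j hj
    obtain ⟨k, rfl⟩ := Nat.exists_eq_add_of_le hj
    have h1 : μ F ≤ ENNReal.ofReal (bfun (n + k)) := by
      calc μ F ≤ μ (C k) := measure_mono (hFC k)
        _ ≤ _ := by rw [← hbval k]; exact hprodbound k
    calc (μ F).toReal ≤ (ENNReal.ofReal (bfun (n+k))).toReal :=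
          ENNReal.toReal_mono ENNReal.ofReal_ne_top h1
      _ = bfun (n + k) := ENNReal.toReal_ofReal (hb0 k)
  have hcobdd : Filter.IsCoboundedUnder (· ≥ ·) Filter.atTop bfun := by
    refine Filter.IsBoundedUnder.isCoboundedUnder_ge ⟨1, Filter.eventually_map.mpr ?_⟩
    filter_upwards [Filter.eventually_ge_atTop n] with j hj
    obtain ⟨k, rfl⟩ := Nat.exists_eq_add_of_le hj
    exact hble1 k
  have hlim : (μ F).toReal ≤ Filter.liminf bfun Filter.atTop := by
    refine Filter.le_liminf_of_le hcobdd ?_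
    filter_upwards [Filter.eventually_ge_atTop n] with j hj
    exact hFle j hj
  rw [hbfun] at hlim
  rw [hliminf] at hlim
  have hF0 : μ F = 0 := by
    have h0 : (μ F).toReal = 0 := le_antisymm hlim ENNReal.toReal_nonneg
    exact ((ENNReal.toReal_eq_zero_iff _).mp h0).resolve_right (measure_ne_top μ F)
  rw [ae_iff]
  have hset : {ω | ¬ ∃ v : List Bool, u <+: v ∧ X v ω = false} = F := by
    ext ω
    simp [hF, not_exists]
  rw [hset]
  exact hF0
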